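/- arXiv:2305.03128 — 4 statements merged into one kernel-verified Lean document; each statement's English description precedes it below -/
import Mathlib

section
/- Let φ : ℝ → ℝ be differentiable. Then u(x,t) = tan( arctan(φ(x e^{-t})) + x(1 − e^{-t}) + t³/3 ) satisfies ∂u/∂t + x·∂u/∂x = (u² + 1)(x + t²) at every point (x,t) where the argument of tan avoids π/2 + kπ, and u(x,0) = φ(x). -/
/-!
Write `u = tan A` with phase `A x t = arctan (φ (x e^{-t})) + x (1 - e^{-t}) + t³/3`. The first
term is constant along the characteristics `x e^{-t} = const` of `∂ₜ + x ∂ₓ`, so this operator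
sends `A` to `x + t²`; since `tan' = tan² + 1`, it sends `tan A` to `(tan² A + 1)(x + t²)`.
-/

open Real

theorem HasDerivAt.tan {f : ℝ → ℝ} {f' x : ℝ} (hf : HasDerivAt f f' x)
    (hcos : Real.cos (f x) ≠ 0) :
    HasDerivAt (fun y => Real.tan (f y)) ((Real.tan (f x) ^ 2 + 1) * f') x := by
  have htan : Real.tan (f x) ^ 2 + 1 = 1 / Real.cos (f x) ^ 2 := by
    rw [add_comm, one_div, ← Real.inv_one_add_tan_sq hcos, inv_inv]
  rw [htan]
  exact (Real.hasDerivAt_tan hcos).comp x hf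

theorem deriv_tan_add_mul_deriv_tan {A : ℝ → ℝ → ℝ} {x t a b : ℝ}
    (ht : HasDerivAt (fun τ => A x τ) a t) (hx : HasDerivAt (fun y => A y t) b x)
    (hcos : cos (A x t) ≠ 0) :
    deriv (fun τ => tan (A x τ)) t + x * deriv (fun y => tan (A y t)) x
      = (tan (A x t) ^ 2 + 1) * (a + x * b) := by
  rw [(ht.tan hcos).deriv, (hx.tan hcos).deriv]
  ring

theorem hasDerivAt_comp_mul_exp_neg_time {g : ℝ → ℝ} {g' x t : ℝ}
    (hg : HasDerivAt g g' (x * exp (-t))) :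
    HasDerivAt (fun τ => g (x * exp (-τ))) (g' * -(x * exp (-t))) t := by
  have hinner : HasDerivAt (fun τ => x * exp (-τ)) (-(x * exp (-t))) t := by
    simpa using ((hasDerivAt_neg t).exp).const_mul x
  exact hg.comp t hinner

theorem hasDerivAt_comp_mul_exp_neg_space {g : ℝ → ℝ} {g' x t : ℝ}
    (hg : HasDerivAt g g' (x * exp (-t))) :
    HasDerivAt (fun y => g (y * exp (-t))) (g' * exp (-t)) x :=
  hg.comp x (hasDerivAt_mul_const (exp (-t)))

theorem stmt_2 (φ : ℝ → ℝ) (hφ : Differentiable ℝ φ)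
    (u : ℝ × ℝ → ℝ)
    (hu : ∀ x t : ℝ, u (x, t) =
      Real.tan (Real.arctan (φ (x * Real.exp (-t))) + x * (1 - Real.exp (-t)) + t ^ 3 / 3)) :
    (∀ x t : ℝ,
      Real.cos (Real.arctan (φ (x * Real.exp (-t))) + x * (1 - Real.exp (-t)) + t ^ 3 / 3) ≠ 0 →
      deriv (fun τ => u (x, τ)) t + x * deriv (fun y => u (y, t)) x
        = ((u (x, t)) ^ 2 + 1) * (x + t ^ 2))
    ∧ (∀ x : ℝ, u (x, 0) = φ x) := by
  refine ⟨fun x t hcos => ?_, fun x => by simp [hu, tan_arctan]⟩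
  set g : ℝ → ℝ := fun s => arctan (φ s)
  obtain ⟨g', hg⟩ : ∃ g', HasDerivAt g g' (x * exp (-t)) :=
    ⟨_, (hφ _).hasDerivAt.arctan⟩
  have ht : HasDerivAt (fun τ => g (x * exp (-τ)) + x * (1 - exp (-τ)) + τ ^ 3 / 3)
      (g' * -(x * exp (-t)) + x * exp (-t) + t ^ 2) t := by
    refine ((hasDerivAt_comp_mul_exp_neg_time hg).add ?_).add ?_
    · simpa using (((hasDerivAt_neg t).exp).const_sub 1).const_mul x
    · simpa using (hasDerivAt_pow 3 t).div_const 3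
  have hx : HasDerivAt (fun y => g (y * exp (-t)) + y * (1 - exp (-t)) + t ^ 3 / 3)
      (g' * exp (-t) + (1 - exp (-t))) x :=
    ((hasDerivAt_comp_mul_exp_neg_space hg).add (hasDerivAt_mul_const _)).add_const _
  simp only [hu]
  rw [deriv_tan_add_mul_deriv_tan
    (A := fun y τ => g (y * exp (-τ)) + y * (1 - exp (-τ)) + τ ^ 3 / 3) ht hx hcos]
  ring
end

section
/- Let φ : ℝ → ℝ be differentiable and nonvanishing. Define F(x,t) = −1 + e^{-t²/2} − (x − t) e^{-t²/2} ∫₀ᵗ e^{s²/2} ds + e^{-t²/2}/φ(x − t). Then u = F⁻¹ satisfies the Bernoulli-type PDE ∂u/∂t + ∂u/∂x = t·u + x·u² at all points (x,t) with F(x,t) ≠ 0, and u(x,0) = φ(x). -/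
/-!
The substitution `v = 1/u` turns the Bernoulli equation `u_t + u_x = t u + x u²` into the linear
transport equation `v_t + v_x = -t v - x`, and `F` is the solution of the latter with
`v(x, 0) = 1/φ(x)`. Along the characteristics `x - t = const` the operator `∂_t + ∂_x` acts on
`c(t) f(x - t)` as `c'(t) f(x - t)`, so the derivative of `φ` never enters the computation; on `F`
it reduces to the ODEs `E' = -t E` and `(E I)' = -t E I + 1` for `E = exp (-t²/2)` and
`I = ∫₀ᵗ exp (s²/2)`.
-/

open Real

/-- `D` is the value at `(x, t)` of `∂_t G + ∂_x G`, both partial derivatives existing there. -/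
def HasTransportDerivAt (G : ℝ × ℝ → ℝ) (D x t : ℝ) : Prop :=
  ∃ a b, HasDerivAt (fun τ => G (x, τ)) a t ∧ HasDerivAt (fun y => G (y, t)) b x ∧ a + b = D

namespace HasTransportDerivAt

variable {G H : ℝ × ℝ → ℝ} {D D' x t : ℝ}

theorem deriv_add_deriv (h : HasTransportDerivAt G D x t) :
    deriv (fun τ => G (x, τ)) t + deriv (fun y => G (y, t)) x = D := by
  obtain ⟨a, b, ha, hb, rfl⟩ := h
  rw [ha.deriv, hb.deriv]

theorem add (hG : HasTransportDerivAt G D x t) (hH : HasTransportDerivAt H D' x t) :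
    HasTransportDerivAt (fun p => G p + H p) (D + D') x t := by
  obtain ⟨a, b, ha, hb, rfl⟩ := hG
  obtain ⟨a', b', ha', hb', rfl⟩ := hH
  exact ⟨a + a', b + b', ha.add ha', hb.add hb', by ring⟩

theorem inv (hG : HasTransportDerivAt G D x t) (h0 : G (x, t) ≠ 0) :
    HasTransportDerivAt (fun p => (G p)⁻¹) (-D / G (x, t) ^ 2) x t := by
  obtain ⟨a, b, ha, hb, rfl⟩ := hG
  exact ⟨_, _, ha.inv h0, hb.inv h0, by ring⟩

end HasTransportDerivAt

theorem hasTransportDerivAt_comp_snd {c : ℝ → ℝ} {c' x t : ℝ} (hc : HasDerivAt c c' t) :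
    HasTransportDerivAt (fun p => c p.2) c' x t :=
  ⟨c', 0, hc, hasDerivAt_const x (c t), add_zero c'⟩

theorem hasTransportDerivAt_mul_comp_sub {c f : ℝ → ℝ} {c' x t : ℝ} (hc : HasDerivAt c c' t)
    (hf : DifferentiableAt ℝ f (x - t)) :
    HasTransportDerivAt (fun p => c p.2 * f (p.1 - p.2)) (c' * f (x - t)) x t := by
  have hτ := hc.mul (hf.hasDerivAt.comp t ((hasDerivAt_id t).const_sub x))
  have hy := (hf.hasDerivAt.comp x ((hasDerivAt_id x).sub_const t)).const_mul (c t)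
  exact ⟨_, _, hτ, hy, by simp only [Function.comp_apply]; ring⟩

theorem hasDerivAt_exp_neg_sq_div_two (t : ℝ) :
    HasDerivAt (fun τ => exp (-τ ^ 2 / 2)) (-t * exp (-t ^ 2 / 2)) t := by
  have h : HasDerivAt (fun τ : ℝ => -τ ^ 2 / 2) (-t) t :=
    (((hasDerivAt_pow 2 t).neg).div_const 2).congr_deriv (by ring)
  simpa only [mul_comm] using h.exp

noncomputable def linearTransportSolution (φ : ℝ → ℝ) (p : ℝ × ℝ) : ℝ :=
  -1 + exp (-p.2 ^ 2 / 2)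
    - (p.1 - p.2) * exp (-p.2 ^ 2 / 2) * (∫ s in (0 : ℝ)..p.2, exp (s ^ 2 / 2))
    + exp (-p.2 ^ 2 / 2) / φ (p.1 - p.2)

theorem hasTransportDerivAt_linearTransportSolution {φ : ℝ → ℝ} {x t : ℝ}
    (hφ : DifferentiableAt ℝ φ (x - t)) (hφ0 : φ (x - t) ≠ 0) :
    HasTransportDerivAt (linearTransportSolution φ)
      (-t * linearTransportSolution φ (x, t) - x) x t := by
  have hE := hasDerivAt_exp_neg_sq_div_two t
  have hI : HasDerivAt (fun τ => ∫ s in (0 : ℝ)..τ, exp (s ^ 2 / 2)) (exp (t ^ 2 / 2)) t :=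
    (by fun_prop : Continuous fun s : ℝ => exp (s ^ 2 / 2)).integral_hasStrictDerivAt 0 t
      |>.hasDerivAt
  have hEI : exp (-t ^ 2 / 2) * exp (t ^ 2 / 2) = 1 := by
    rw [← exp_add, show -t ^ 2 / 2 + t ^ 2 / 2 = 0 by ring, exp_zero]
  have h := ((hasTransportDerivAt_comp_snd (hE.const_add (-1))).add
    (hasTransportDerivAt_mul_comp_sub (hE.mul hI).neg differentiableAt_id)).add
    (hasTransportDerivAt_mul_comp_sub hE (hφ.inv hφ0))
  convert h using 1
  · funext p
    simp only [linearTransportSolution, id, Pi.inv_apply, Pi.neg_apply, Pi.mul_apply]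
    ring
  · simp only [linearTransportSolution, id, Pi.inv_apply]
    linear_combination (x - t) * hEI

theorem stmt_4 (φ : ℝ → ℝ) (hφ : Differentiable ℝ φ) (hφ0 : ∀ y, φ y ≠ 0)
    (F : ℝ × ℝ → ℝ)
    (hF : ∀ x t : ℝ, F (x, t) =
      -1 + Real.exp (-t ^ 2 / 2)
        - (x - t) * Real.exp (-t ^ 2 / 2) * (∫ s in (0 : ℝ)..t, Real.exp (s ^ 2 / 2))
        + Real.exp (-t ^ 2 / 2) / φ (x - t))
    (u : ℝ × ℝ → ℝ) (hu : ∀ x t : ℝ, u (x, t) = (F (x, t))⁻¹) :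
    (∀ x t : ℝ, F (x, t) ≠ 0 →
      deriv (fun τ => u (x, τ)) t + deriv (fun y => u (y, t)) x
        = t * u (x, t) + x * (u (x, t)) ^ 2)
    ∧ (∀ x : ℝ, u (x, 0) = φ x) := by
  have hF' : F = linearTransportSolution φ := funext fun p => hF p.1 p.2
  have hu' : u = fun p => (linearTransportSolution φ p)⁻¹ := funext fun p => by
    rw [hu p.1 p.2, hF']
  subst hF' hu'
  refine ⟨fun x t hF0 => ?_, fun x => ?_⟩
  · have hv := hasTransportDerivAt_linearTransportSolution (hφ (x - t)) (hφ0 (x - t))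
    rw [(hv.inv hF0).deriv_add_deriv]
    field_simp
    ring
  · simp [linearTransportSolution]
end

section
/- Let φ : ℝ → ℝ be differentiable and nonvanishing. Define F(x,t) = −e^{-t²/2 − t}·x·∫₀ᵗ e^{s + s²/2} ds + (e^{-t²/2} − 1) + e^{-t²/2}/φ(x e^{-t}). Then u = F⁻¹ satisfies ∂u/∂t + x·∂u/∂x = t·u + (x + t)·u² at all points where F(x,t) ≠ 0, with u(x,0) = φ(x). -/
/-!
The reciprocal `F = 1/u` turns the Riccati equation `u_t + x u_x = t u + (x + t) u²` into the
linear transport equation `F_t + x F_x = -t F - (x + t)`. Along the characteristics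
`x e^{-t} = const` the term `1/φ(x e^{-t})` is constant, and the remaining terms of `F` are chosen
to solve the inhomogeneous equation, the integral `∫₀ᵗ e^{s + s²/2} ds` cancelling the factor
`e^{-t²/2 - t}`.
-/

open Real

theorem riccati_inv_of_transport {g h : ℝ → ℝ} {a b x t : ℝ}
    (hg : HasDerivAt g a t) (hh : HasDerivAt h b x) (hgh : g t = h x) (hne : g t ≠ 0)
    (htransport : a + x * b = -t * g t - (x + t)) :
    deriv (fun τ => (g τ)⁻¹) t + x * deriv (fun y => (h y)⁻¹) x
      = t * (g t)⁻¹ + (x + t) * ((g t)⁻¹) ^ 2 := by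
  rw [(hg.fun_inv hne).deriv, (hh.fun_inv (hgh ▸ hne)).deriv, ← hgh]
  field_simp
  linear_combination -htransport

noncomputable def reciprocalSolution (φ : ℝ → ℝ) (x t : ℝ) : ℝ :=
  -(exp (-t ^ 2 / 2 - t)) * x * (∫ s in (0 : ℝ)..t, exp (s + s ^ 2 / 2))
    + (exp (-t ^ 2 / 2) - 1) + exp (-t ^ 2 / 2) / φ (x * exp (-t))

section reciprocalSolution

variable {φ : ℝ → ℝ} {x t : ℝ}

theorem hasDerivAt_integral_exp_add_sq_div_two (t : ℝ) :
    HasDerivAt (fun τ => ∫ s in (0 : ℝ)..τ, exp (s + s ^ 2 / 2)) (exp (t + t ^ 2 / 2)) t :=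
  ((by fun_prop : Continuous fun s : ℝ => exp (s + s ^ 2 / 2)).integral_hasStrictDerivAt
    0 t).hasDerivAt

theorem hasDerivAt_reciprocalSolution_time (hφ : DifferentiableAt ℝ φ (x * exp (-t)))
    (hφ0 : φ (x * exp (-t)) ≠ 0) :
    HasDerivAt (reciprocalSolution φ x)
      ((t + 1) * exp (-t ^ 2 / 2 - t) * x * (∫ s in (0 : ℝ)..t, exp (s + s ^ 2 / 2)) - x
        - t * exp (-t ^ 2 / 2)
        + exp (-t ^ 2 / 2) * (x * exp (-t) * deriv φ (x * exp (-t)) - t * φ (x * exp (-t)))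
          / φ (x * exp (-t)) ^ 2) t := by
  have hquad : HasDerivAt (fun τ : ℝ => -τ ^ 2 / 2) (-t) t :=
    ((hasDerivAt_pow 2 t).neg.div_const 2).congr_deriv (by ring)
  have hφc :
      HasDerivAt (fun τ => φ (x * exp (-τ))) (deriv φ (x * exp (-t)) * (x * -exp (-t))) t :=
    hφ.hasDerivAt.comp t (by simpa using ((hasDerivAt_neg t).exp).const_mul x)
  have hsum := ((((hquad.sub (hasDerivAt_id t)).exp.neg.mul_const x).mul
      (hasDerivAt_integral_exp_add_sq_div_two t)).add (hquad.exp.sub_const 1)).add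
    (hquad.exp.div hφc hφ0)
  refine hsum.congr_deriv ?_
  have hcancel : exp (-t ^ 2 / 2 - t) * exp (t + t ^ 2 / 2) = 1 := by
    rw [← exp_add]; ring_nf; exact exp_zero
  simp only [Pi.sub_apply, Pi.neg_apply, id]
  linear_combination (-x) * hcancel

theorem hasDerivAt_reciprocalSolution_space (hφ : DifferentiableAt ℝ φ (x * exp (-t)))
    (hφ0 : φ (x * exp (-t)) ≠ 0) :
    HasDerivAt (fun y => reciprocalSolution φ y t)
      (-exp (-t ^ 2 / 2 - t) * (∫ s in (0 : ℝ)..t, exp (s + s ^ 2 / 2))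
        - exp (-t ^ 2 / 2) * exp (-t) * deriv φ (x * exp (-t)) / φ (x * exp (-t)) ^ 2) x := by
  have hφc : HasDerivAt (fun y => φ (y * exp (-t))) (deriv φ (x * exp (-t)) * exp (-t)) x :=
    hφ.hasDerivAt.comp x (by simpa using (hasDerivAt_id x).mul_const (exp (-t)))
  have hsum := ((((hasDerivAt_id x).const_mul (-exp (-t ^ 2 / 2 - t))).mul_const
      (∫ s in (0 : ℝ)..t, exp (s + s ^ 2 / 2))).add_const (exp (-t ^ 2 / 2) - 1)).add
    ((hasDerivAt_const x (exp (-t ^ 2 / 2))).div hφc hφ0)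
  refine hsum.congr_deriv ?_
  field_simp
  ring

theorem reciprocalSolution_transport (hφ0 : φ (x * exp (-t)) ≠ 0) :
    ((t + 1) * exp (-t ^ 2 / 2 - t) * x * (∫ s in (0 : ℝ)..t, exp (s + s ^ 2 / 2)) - x
        - t * exp (-t ^ 2 / 2)
        + exp (-t ^ 2 / 2) * (x * exp (-t) * deriv φ (x * exp (-t)) - t * φ (x * exp (-t)))
          / φ (x * exp (-t)) ^ 2)
      + x * (-exp (-t ^ 2 / 2 - t) * (∫ s in (0 : ℝ)..t, exp (s + s ^ 2 / 2))
        - exp (-t ^ 2 / 2) * exp (-t) * deriv φ (x * exp (-t)) / φ (x * exp (-t)) ^ 2)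
      = -t * reciprocalSolution φ x t - (x + t) := by
  unfold reciprocalSolution
  field_simp
  ring

end reciprocalSolution

theorem stmt_5 (φ : ℝ → ℝ) (hφ : Differentiable ℝ φ) (hφ0 : ∀ y, φ y ≠ 0)
    (F : ℝ × ℝ → ℝ)
    (hF : ∀ x t : ℝ, F (x, t) =
      -(Real.exp (-t ^ 2 / 2 - t)) * x * (∫ s in (0 : ℝ)..t, Real.exp (s + s ^ 2 / 2))
        + (Real.exp (-t ^ 2 / 2) - 1)
        + Real.exp (-t ^ 2 / 2) / φ (x * Real.exp (-t)))
    (u : ℝ × ℝ → ℝ) (hu : ∀ x t : ℝ, u (x, t) = (F (x, t))⁻¹) :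
    (∀ x t : ℝ, F (x, t) ≠ 0 →
      deriv (fun τ => u (x, τ)) t + x * deriv (fun y => u (y, t)) x
        = t * u (x, t) + (x + t) * (u (x, t)) ^ 2)
    ∧ (∀ x : ℝ, u (x, 0) = φ x) := by
  have hFu : ∀ x t, u (x, t) = (reciprocalSolution φ x t)⁻¹ := fun x t => by
    rw [hu, hF, reciprocalSolution]
  refine ⟨fun x t hF0 => ?_, fun x => by simp [hFu, reciprocalSolution]⟩
  rw [hF, ← reciprocalSolution] at hF0
  simp only [hFu]
  exact riccati_inv_of_transport (hasDerivAt_reciprocalSolution_time (hφ _) (hφ0 _))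
    (hasDerivAt_reciprocalSolution_space (hφ _) (hφ0 _)) rfl hF0
    (reciprocalSolution_transport (hφ0 _))
end

section
/- Let u : ℝ × ℝ → ℝ be C¹ with u(x,t) > 0, b : ℝ → ℝ continuous, B an antiderivative of b, and suppose h(x,t) := u_t(x,t)·e^{B(u(x,t))} is C¹. If u_t(x,t) = (H(t) + K(u(x,t)))·e^{-B(u(x,t))} where H, K are C¹ with H'(t) = α(x(t),t) and K'(y) = G(y)·e^{B(y)}, and x'(t) = a(x(t),t), then u satisfies u_tt + a·u_xt + b(u)·u_t·(u_t + a·u_x) = α(x,t)·e^{-B(u)} + G(u)·(u_t + a·u_x) along the characteristic curve (x(t), t). -/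
/-!
Put `h := u_t e^{B(u)}`. The ansatz says that `h(x(s), s) = H(s) + K(u(x(s), s))`, so differentiating
along the characteristic gives `Dh·(a, 1) = α + G(u) e^{B(u)} Du·(a, 1)`. Since `u_t = h e^{-B(u)}`,
the product and chain rules give `D(u_t) = e^{-B(u)} Dh - b(u) u_t Du`. Evaluating at `(a, 1)`, where
`D(u_t)·(a, 1) = u_tt + a u_xt` and `Du·(a, 1) = u_t + a u_x`, yields the equation.
-/

open Real

section PartialDerivatives

variable {𝕜 F : Type*} [NontriviallyNormedField 𝕜] [NormedAddCommGroup F] [NormedSpace 𝕜 F]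

theorem HasFDerivAt.deriv_snd_add_smul_deriv_fst {f : 𝕜 × 𝕜 → F} {f' : 𝕜 × 𝕜 →L[𝕜] F}
    {y s : 𝕜} (hf : HasFDerivAt f f' (y, s)) (c : 𝕜) :
    deriv (fun τ => f (y, τ)) s + c • deriv (fun z => f (z, s)) y = f' (c, 1) := by
  have h_snd : deriv (fun τ => f (y, τ)) s = f' (0, 1) :=
    (hf.comp_hasDerivAt s ((hasDerivAt_const s y).prodMk (hasDerivAt_id s))).deriv
  have h_fst : deriv (fun z => f (z, s)) y = f' (1, 0) :=
    (hf.comp_hasDerivAt y ((hasDerivAt_id y).prodMk (hasDerivAt_const y s))).deriv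
  have h_split : ((c, 1) : 𝕜 × 𝕜) = c • ((1, 0) : 𝕜 × 𝕜) + (0, 1) := by simp
  rw [h_snd, h_fst, h_split, map_add, map_smul, add_comm]

theorem HasFDerivAt.hasDerivAt_comp_graph {f : 𝕜 × 𝕜 → F} {f' : 𝕜 × 𝕜 →L[𝕜] F}
    {x : 𝕜 → 𝕜} {x' t : 𝕜} (hf : HasFDerivAt f f' (x t, t)) (hx : HasDerivAt x x' t) :
    HasDerivAt (fun s => f (x s, s)) (f' (x', 1)) t :=
  hf.comp_hasDerivAt_of_eq t (hx.prodMk (hasDerivAt_id t)) rfl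

end PartialDerivatives

theorem HasFDerivAt.mul_exp_neg_comp {E : Type*} [NormedAddCommGroup E] [NormedSpace ℝ E]
    {k v : E → ℝ} {k' v' : E →L[ℝ] ℝ} {B : ℝ → ℝ} {β : ℝ} {p : E}
    (hk : HasFDerivAt k k' p) (hv : HasFDerivAt v v' p) (hB : HasDerivAt B β (v p)) :
    HasFDerivAt (fun q => k q * Real.exp (-B (v q)))
      (Real.exp (-B (v p)) • k' - (β * (k p * Real.exp (-B (v p)))) • v') p := by
  refine (hk.mul (hB.comp_hasFDerivAt p hv).neg.exp).congr_fderiv ?_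
  ext q
  simp only [sub_apply, add_apply, smul_apply, neg_apply, smul_eq_mul, Function.comp_apply,
    Pi.neg_apply]
  ring

theorem fderiv_apply_eq_of_comp_graph_eq {h u : ℝ × ℝ → ℝ} {x H K : ℝ → ℝ} {x' H' K' t : ℝ}
    (hh : DifferentiableAt ℝ h (x t, t)) (hu : DifferentiableAt ℝ u (x t, t))
    (hx : HasDerivAt x x' t) (hH : HasDerivAt H H' t) (hK : HasDerivAt K K' (u (x t, t)))
    (h_eq : (fun s => h (x s, s)) = fun s => H s + K (u (x s, s))) :
    fderiv ℝ h (x t, t) (x', 1) = H' + K' * fderiv ℝ u (x t, t) (x', 1) := by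
  have h_lhs := hh.hasFDerivAt.hasDerivAt_comp_graph hx
  rw [h_eq] at h_lhs
  exact h_lhs.unique (hH.add (hK.comp t (hu.hasFDerivAt.hasDerivAt_comp_graph hx)))

theorem stmt_13_general (a α : ℝ × ℝ → ℝ) (b G : ℝ → ℝ)
    (B : ℝ → ℝ) (hB : ∀ y : ℝ, HasDerivAt B (b y) y)
    (u : ℝ × ℝ → ℝ) (hu : ContDiff ℝ 1 u)
    (hh : ContDiff ℝ 1
      (fun p : ℝ × ℝ => deriv (fun τ => u (p.1, τ)) p.2 * Real.exp (B (u p))))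
    (x : ℝ → ℝ) (hx : ∀ t : ℝ, HasDerivAt x (a (x t, t)) t)
    (H K : ℝ → ℝ)
    (hH' : ∀ t : ℝ, HasDerivAt H (α (x t, t)) t)
    (hK' : ∀ y : ℝ, HasDerivAt K (G y * Real.exp (B y)) y)
    (hansatz : ∀ t : ℝ,
      deriv (fun τ => u (x t, τ)) t
        = (H t + K (u (x t, t))) * Real.exp (-B (u (x t, t)))) :
    ∀ t : ℝ,
      deriv (fun τ => deriv (fun σ => u (x t, σ)) τ) t
        + a (x t, t) * deriv (fun y => deriv (fun τ => u (y, τ)) t) (x t)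
        + b (u (x t, t)) * deriv (fun τ => u (x t, τ)) t
          * (deriv (fun τ => u (x t, τ)) t
              + a (x t, t) * deriv (fun y => u (y, t)) (x t))
      = α (x t, t) * Real.exp (-B (u (x t, t)))
        + G (u (x t, t))
          * (deriv (fun τ => u (x t, τ)) t
              + a (x t, t) * deriv (fun y => u (y, t)) (x t)) := by
  intro t
  set ut : ℝ × ℝ → ℝ := fun p => deriv (fun τ => u (p.1, τ)) p.2
  set h : ℝ × ℝ → ℝ := fun p => ut p * exp (B (u p))
  have hu_diff : Differentiable ℝ u := hu.differentiable one_ne_zero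
  have hh_diff : Differentiable ℝ h := hh.differentiable one_ne_zero
  have h_ut : ut = fun q => h q * exp (-B (u q)) := by
    funext q
    simp [h, mul_assoc, ← exp_add]
  have h_graph : (fun s => h (x s, s)) = fun s => H s + K (u (x s, s)) := by
    funext s
    simp [h, ut, hansatz s, mul_assoc, ← exp_add]
  have h_transport := fderiv_apply_eq_of_comp_graph_eq (hh_diff _) (hu_diff _) (hx t) (hH' t)
    (hK' _) h_graph
  have hD_ut := HasFDerivAt.mul_exp_neg_comp (hh_diff (x t, t)).hasFDerivAt
    (hu_diff (x t, t)).hasFDerivAt (hB _)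
  rw [← h_ut] at hD_ut
  have h_second := hD_ut.deriv_snd_add_smul_deriv_fst (a (x t, t))
  have h_first := HasFDerivAt.deriv_snd_add_smul_deriv_fst (hu_diff (x t, t)).hasFDerivAt
    (a (x t, t))
  have h_exp : exp (-B (u (x t, t))) * exp (B (u (x t, t))) = 1 := by
    rw [← exp_add, neg_add_cancel, exp_zero]
  have h_ut_at : ut (x t, t) = h (x t, t) * exp (-B (u (x t, t))) := congrFun h_ut (x t, t)
  simp only [smul_eq_mul, sub_apply, smul_apply] at h_second h_first
  linear_combination h_second + exp (-B (u (x t, t))) * h_transport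
    + G (u (x t, t)) * fderiv ℝ u (x t, t) (a (x t, t), 1) * h_exp
    + (b (u (x t, t)) * ut (x t, t) - G (u (x t, t))) * h_first
    + b (u (x t, t)) * fderiv ℝ u (x t, t) (a (x t, t), 1) * h_ut_at

theorem stmt_13 (a α : ℝ × ℝ → ℝ) (b G : ℝ → ℝ) (hb : Continuous b) (hG : Continuous G)
    (B : ℝ → ℝ) (hB : ∀ y : ℝ, HasDerivAt B (b y) y)
    (u : ℝ × ℝ → ℝ) (hu : ContDiff ℝ 1 u) (hpos : ∀ x t : ℝ, 0 < u (x, t))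
    (hh : ContDiff ℝ 1
      (fun p : ℝ × ℝ => deriv (fun τ => u (p.1, τ)) p.2 * Real.exp (B (u p))))
    (x : ℝ → ℝ) (hx : ∀ t : ℝ, HasDerivAt x (a (x t, t)) t)
    (H K : ℝ → ℝ) (hHC : ContDiff ℝ 1 H) (hKC : ContDiff ℝ 1 K)
    (hH' : ∀ t : ℝ, HasDerivAt H (α (x t, t)) t)
    (hK' : ∀ y : ℝ, HasDerivAt K (G y * Real.exp (B y)) y)
    (hansatz : ∀ t : ℝ,
      deriv (fun τ => u (x t, τ)) t
        = (H t + K (u (x t, t))) * Real.exp (-B (u (x t, t)))) :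
    ∀ t : ℝ,
      deriv (fun τ => deriv (fun σ => u (x t, σ)) τ) t
        + a (x t, t) * deriv (fun y => deriv (fun τ => u (y, τ)) t) (x t)
        + b (u (x t, t)) * deriv (fun τ => u (x t, τ)) t
          * (deriv (fun τ => u (x t, τ)) t
              + a (x t, t) * deriv (fun y => u (y, t)) (x t))
      = α (x t, t) * Real.exp (-B (u (x t, t)))
        + G (u (x t, t))
          * (deriv (fun τ => u (x t, τ)) t
              + a (x t, t) * deriv (fun y => u (y, t)) (x t)) :=
  stmt_13_general a α b G B hB u hu hh x hx H K hH' hK' hansatz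
end
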